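/- arXiv:0810.0870 — 5 statements merged into one kernel-verified Lean document; each statement's English description precedes it below -/
import Mathlib

section
/- Let X be a real-valued random variable with X ≥ 0 almost surely, mean μ = E[X] and finite variance σ². Suppose there exists ρ ∈ (0,1) such that |X − μ| ≤ ρ(1+μ) almost surely, and suppose the sequence c_n = E[(X−μ)^n]/(n(1+μ)^n), n ≥ 2, is nonnegative and nonincreasing in n. Then log₂(1+μ) − (log₂ e)·σ²/(2(1+μ)²) ≤ E[log₂(1+X)] ≤ log₂(1+μ). -/
open MeasureTheory ProbabilityTheory Real

/-!
Put `Y = (X - μ) / (1 + μ)`, so that `1 + X = (1 + μ) (1 + Y)` and `|Y| ≤ ρ < 1`. The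
logarithm series of `log (1 + Y)` is then dominated by a geometric series and may be integrated
termwise; since `E[Y] = 0` this gives `E[log (1 + X)] = log (1 + μ) - ∑ₖ (-1)ᵏ cₖ₊₂`. The
alternating series has decreasing terms, so its sum lies between `0` and its first term
`c₂ = σ² / (2 (1 + μ)²)`.
-/

theorem Antitone.mem_Icc_of_hasSum_alternating {E : Type*} [Ring E] [PartialOrder E]
    [IsOrderedRing E] [TopologicalSpace E] [OrderClosedTopology E]
    {a : ℕ → E} {l : E} (ha : Antitone a) (hl : HasSum (fun k ↦ (-1) ^ k * a k) l) :
    l ∈ Set.Icc 0 (a 0) :=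
  ⟨by simpa using ha.alternating_series_le_tendsto hl.tendsto_sum_nat 0,
    by simpa using ha.tendsto_le_alternating_series hl.tendsto_sum_nat 0⟩

theorem Real.hasSum_alternating_pow_div_log_one_add {x : ℝ} (h : |x| < 1) :
    HasSum (fun n : ℕ ↦ (-1) ^ n * x ^ (n + 1) / (n + 1)) (log (1 + x)) := by
  have := (hasSum_pow_div_log_of_abs_lt_one (x := -x) (by rwa [abs_neg])).neg
  rw [neg_neg, sub_neg_eq_add] at this
  refine this.congr_fun fun n ↦ ?_
  rw [neg_pow, pow_succ]
  ring

theorem Real.abs_log_one_add_le {x : ℝ} (h : |x| < 1) : |log (1 + x)| ≤ |x| / (1 - |x|) := by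
  simpa [← sub_eq_add_neg] using abs_log_sub_add_sum_range_le (x := -x) (by rwa [abs_neg]) 0

section BoundedRandomVariable

variable {Ω : Type*} [MeasurableSpace Ω] {P : Measure Ω} [IsFiniteMeasure P] {Y : Ω → ℝ}
  {ρ : ℝ}

theorem integrable_log_one_add_of_abs_le (hY : AEMeasurable Y P) (hρ : ρ < 1)
    (hYρ : ∀ᵐ ω ∂P, |Y ω| ≤ ρ) : Integrable (fun ω ↦ log (1 + Y ω)) P := by
  refine .of_bound (measurable_log.comp_aemeasurable (hY.const_add 1)).aestronglyMeasurable
    (ρ / (1 - ρ)) ?_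
  filter_upwards [hYρ] with ω h
  calc ‖log (1 + Y ω)‖ ≤ |Y ω| / (1 - |Y ω|) := abs_log_one_add_le (h.trans_lt hρ)
    _ ≤ ρ / (1 - ρ) := by gcongr; linarith [abs_nonneg (Y ω)]

theorem hasSum_integral_log_one_add (hY : AEMeasurable Y P) (hρ0 : 0 ≤ ρ) (hρ1 : ρ < 1)
    (hYρ : ∀ᵐ ω ∂P, |Y ω| ≤ ρ) :
    HasSum (fun n : ℕ ↦ (-1) ^ n * (∫ ω, Y ω ^ (n + 1) ∂P) / (n + 1))
      (∫ ω, log (1 + Y ω) ∂P) := by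
  have hsum : HasSum (fun n : ℕ ↦ ∫ ω, (-1) ^ n * Y ω ^ (n + 1) / (n + 1) ∂P)
      (∫ ω, log (1 + Y ω) ∂P) := by
    refine hasSum_integral_of_dominated_convergence (fun n _ ↦ ρ ^ (n + 1))
      (fun n ↦ by fun_prop) (fun n ↦ ?_) (.of_forall fun _ ↦ ?_) (integrable_const _) ?_
    · filter_upwards [hYρ] with ω h
      rw [norm_div, norm_mul, norm_pow, norm_neg, norm_one, one_pow, one_mul, norm_pow]
      calc ‖Y ω‖ ^ (n + 1) / ‖(n : ℝ) + 1‖ ≤ ‖Y ω‖ ^ (n + 1) :=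
            div_le_self (by positivity) (by rw [Real.norm_eq_abs]; norm_cast; simp)
        _ ≤ ρ ^ (n + 1) := pow_le_pow_left₀ (norm_nonneg _) h _
    · exact (summable_nat_add_iff 1).mpr (summable_geometric_of_lt_one hρ0 hρ1)
    · filter_upwards [hYρ] with ω h
      exact hasSum_alternating_pow_div_log_one_add (h.trans_lt hρ1)
  simpa only [integral_div, integral_const_mul] using hsum

theorem integral_log_one_add_mem_Icc (hY : AEMeasurable Y P) (hρ0 : 0 ≤ ρ) (hρ1 : ρ < 1)
    (hYρ : ∀ᵐ ω ∂P, |Y ω| ≤ ρ) (hmean : ∫ ω, Y ω ∂P = 0)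
    (hanti : Antitone fun k : ℕ ↦ (∫ ω, Y ω ^ (k + 2) ∂P) / (k + 2)) :
    ∫ ω, log (1 + Y ω) ∂P ∈ Set.Icc (-((∫ ω, Y ω ^ 2 ∂P) / 2)) 0 := by
  have hs := (hasSum_nat_add_iff' 1).mpr (hasSum_integral_log_one_add hY hρ0 hρ1 hYρ)
  simp only [Finset.range_one, Finset.sum_singleton, zero_add, pow_zero, pow_one, hmean,
    mul_zero, zero_div, sub_zero] at hs
  have hmem := hanti.mem_Icc_of_hasSum_alternating <| hs.neg.congr_fun fun k ↦ by
    push_cast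
    ring
  simp only [CharP.cast_eq_zero, zero_add, Set.mem_Icc, neg_nonneg] at hmem
  exact ⟨by linarith [hmem.2], by linarith [hmem.1]⟩

end BoundedRandomVariable

theorem integral_log_mul_one_add {Ω : Type*} [MeasurableSpace Ω] {P : Measure Ω}
    [IsProbabilityMeasure P] {Y : Ω → ℝ} {ρ c : ℝ} (hY : AEMeasurable Y P) (hρ : ρ < 1)
    (hYρ : ∀ᵐ ω ∂P, |Y ω| ≤ ρ) (hc : 0 < c) :
    ∫ ω, log (c * (1 + Y ω)) ∂P = log c + ∫ ω, log (1 + Y ω) ∂P := by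
  have hsplit : ∀ᵐ ω ∂P, log (c * (1 + Y ω)) = log c + log (1 + Y ω) := by
    filter_upwards [hYρ] with ω h
    exact log_mul hc.ne' (by linarith [neg_abs_le (Y ω)])
  rw [integral_congr_ae hsplit, integral_add (integrable_const _)
    (integrable_log_one_add_of_abs_le hY hρ hYρ), integral_const]
  simp

theorem expected_log_rate_bracket_general
    {Ω : Type*} [MeasureSpace Ω] [IsProbabilityMeasure (ℙ : Measure Ω)]
    (X : Ω → ℝ)
    (hX0 : ∀ᵐ ω ∂ℙ, 0 ≤ X ω)
    (hL2 : MemLp X 2 ℙ)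
    (μ σ2 : ℝ) (hμ : μ = ∫ ω, X ω ∂ℙ) (hσ2 : σ2 = variance X ℙ)
    (hρ : ∃ ρ : ℝ, ρ ∈ Set.Ioo (0 : ℝ) 1 ∧ ∀ᵐ ω ∂ℙ, |X ω - μ| ≤ ρ * (1 + μ))
    (hc_anti : ∀ n : ℕ, 2 ≤ n →
      (∫ ω, (X ω - μ) ^ (n + 1) ∂ℙ) / ((n + 1) * (1 + μ) ^ (n + 1)) ≤
        (∫ ω, (X ω - μ) ^ n ∂ℙ) / (n * (1 + μ) ^ n)) :
    logb 2 (1 + μ) - logb 2 (Real.exp 1) * σ2 / (2 * (1 + μ) ^ 2) ≤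
        ∫ ω, logb 2 (1 + X ω) ∂ℙ ∧
      ∫ ω, logb 2 (1 + X ω) ∂ℙ ≤ logb 2 (1 + μ) := by
  obtain ⟨ρ, ⟨hρ0, hρ1⟩, hXρ⟩ := hρ
  have h1μ : 0 < 1 + μ := by linarith [hμ ▸ integral_nonneg_of_ae hX0]
  set Y : Ω → ℝ := fun ω ↦ (X ω - μ) / (1 + μ)
  have hY : AEMeasurable Y ℙ := (hL2.aemeasurable.sub_const μ).div_const _
  have hYρ : ∀ᵐ ω ∂ℙ, |Y ω| ≤ ρ := by
    filter_upwards [hXρ] with ω h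
    rwa [abs_div, abs_of_pos h1μ, div_le_iff₀ h1μ]
  have hmean : ∫ ω, Y ω ∂ℙ = 0 := by
    simp [Y, integral_div, integral_sub (hL2.integrable one_le_two), ← hμ]
  have hc (n : ℕ) : (∫ ω, Y ω ^ n ∂ℙ) / n = (∫ ω, (X ω - μ) ^ n ∂ℙ) / (n * (1 + μ) ^ n) := by
    simp only [Y, div_pow, integral_div, div_div, mul_comm]
  have hanti : Antitone fun k : ℕ ↦ (∫ ω, Y ω ^ (k + 2) ∂ℙ) / (k + 2) :=
    antitone_nat_of_succ_le fun k ↦ by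
      have := hc_anti (k + 2) (by omega)
      rw [← Nat.cast_succ, ← hc, ← hc] at this
      rw [show k + 1 + 2 = k + 2 + 1 by ring]
      exact_mod_cast this
  obtain ⟨hlo, hhi⟩ := integral_log_one_add_mem_Icc hY hρ0.le hρ1 hYρ hmean hanti
  have hvar : (∫ ω, Y ω ^ 2 ∂ℙ) / 2 = σ2 / (2 * (1 + μ) ^ 2) := by
    rw [hσ2, variance_eq_integral hL2.aemeasurable, ← hμ]
    exact_mod_cast hc 2
  have hlog : ∫ ω, log (1 + X ω) ∂ℙ = log (1 + μ) + ∫ ω, log (1 + Y ω) ∂ℙ := by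
    rw [← integral_log_mul_one_add hY hρ1 hYρ h1μ]
    congr with ω
    rw [mul_add, mul_one, mul_div_cancel₀ _ h1μ.ne', add_add_sub_cancel]
  simp only [logb, log_exp, integral_div, hlog]
  constructor
  · calc _ = (log (1 + μ) - σ2 / (2 * (1 + μ) ^ 2)) / log 2 := by ring
      _ ≤ _ := by gcongr; linarith
  · gcongr
    linarith

/-- Bracketing estimate for the expected rate `E[log₂(1+X)]` of a nonnegative random
variable `X`: lower bound by the second-order truncated Taylor expansion of `log₂(1+x)`
about the mean `μ`, upper bound by Jensen's inequality. -/
theorem expected_log_rate_bracket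
    {Ω : Type*} [MeasureSpace Ω] [IsProbabilityMeasure (ℙ : Measure Ω)]
    (X : Ω → ℝ) (hXmeas : AEMeasurable X ℙ)
    (hX0 : ∀ᵐ ω ∂ℙ, 0 ≤ X ω)
    (hL2 : MemLp X 2 ℙ)
    (μ σ2 : ℝ) (hμ : μ = ∫ ω, X ω ∂ℙ) (hσ2 : σ2 = variance X ℙ)
    (hρ : ∃ ρ : ℝ, ρ ∈ Set.Ioo (0 : ℝ) 1 ∧ ∀ᵐ ω ∂ℙ, |X ω - μ| ≤ ρ * (1 + μ))
    (hc_nonneg : ∀ n : ℕ, 2 ≤ n →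
      0 ≤ (∫ ω, (X ω - μ) ^ n ∂ℙ) / (n * (1 + μ) ^ n))
    (hc_anti : ∀ n : ℕ, 2 ≤ n →
      (∫ ω, (X ω - μ) ^ (n + 1) ∂ℙ) / ((n + 1) * (1 + μ) ^ (n + 1)) ≤
        (∫ ω, (X ω - μ) ^ n ∂ℙ) / (n * (1 + μ) ^ n)) :
    logb 2 (1 + μ) - logb 2 (Real.exp 1) * σ2 / (2 * (1 + μ) ^ 2) ≤
        ∫ ω, logb 2 (1 + X ω) ∂ℙ ∧
      ∫ ω, logb 2 (1 + X ω) ∂ℙ ≤ logb 2 (1 + μ) :=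
  expected_log_rate_bracket_general X hX0 hL2 μ σ2 hμ hσ2 hρ hc_anti
end

section
/- Let ε₁ and ε₂ be real-valued random variables with ε₁ ≥ 0 and ε₂ ≥ 0 almost surely, means μ₁ = E[ε₁], μ₂ = E[ε₂], and let ε₁ have finite variance σ₁². Suppose there exists ρ ∈ (0,1) such that |ε₁ − μ₁| ≤ ρ(1+μ₁) almost surely, and the sequence c_n = E[(ε₁−μ₁)^n]/(n(1+μ₁)^n), n ≥ 2, is nonnegative and nonincreasing in n. If R ≥ 0 satisfies log₂(1+μ₁) − (log₂ e)·σ₁²/(2(1+μ₁)²) − log₂(1+μ₂) ≥ R, then E[log₂(1+ε₁) − log₂(1+ε₂)] ≥ R. -/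
/-! Put `m = 1 + E ε₁` and `X = (ε₁ - E ε₁) / m`, so that `log (1 + ε₁) = log m + log (1 + X)`
with `|X| ≤ ρ < 1` almost surely. The Taylor series `X - log (1 + X) = ∑ (-1)ⁿ Xⁿ⁺² / (n + 2)`
is then dominated by the geometric series `∑ ρⁿ⁺²` and can be integrated termwise. The result is
an alternating series with antitone terms `E[Xⁿ⁺²] / (n + 2)`, hence at most its first term
`E[X²] / 2 = Var ε₁ / (2 m²)`; since `E X = 0`, this gives
`E log (1 + ε₁) ≥ log m - Var ε₁ / (2 m²)`. On the other side, Jensen's inequality for the concave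
function `log (1 + ·)` gives `E log (1 + ε₂) ≤ log (1 + E ε₂)`. -/

open MeasureTheory ProbabilityTheory Real

theorem Antitone.le_first_of_hasSum_alternating {f : ℕ → ℝ} {l : ℝ} (hf : Antitone f)
    (hl : HasSum (fun n => (-1) ^ n * f n) l) : l ≤ f 0 := by
  simpa using hf.tendsto_le_alternating_series hl.tendsto_sum_nat 0

namespace Real

theorem abs_log_one_add_le_s1 {x : ℝ} (hx : |x| < 1) : |log (1 + x)| ≤ |x| / (1 - |x|) := by
  simpa [sub_neg_eq_add] using abs_log_sub_add_sum_range_le (x := -x) (by rwa [abs_neg]) 0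

theorem hasSum_sub_log_one_add {x : ℝ} (hx : |x| < 1) :
    HasSum (fun n : ℕ => (-1) ^ n * (x ^ (n + 2) / (n + 2))) (x - log (1 + x)) := by
  have h := hasSum_pow_div_log_of_abs_lt_one (x := -x) (by rwa [abs_neg])
  rw [← hasSum_nat_add_iff' 1] at h
  have hterm : (fun n : ℕ => (-x) ^ (n + 1 + 1) / (((n + 1 : ℕ) : ℝ) + 1)) =
      fun n : ℕ => (-1) ^ n * (x ^ (n + 2) / (n + 2)) := by
    funext n
    push_cast
    ring
  have hsum : -log (1 - -x) - ∑ i ∈ Finset.range 1, (-x) ^ (i + 1) / ((i : ℝ) + 1) =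
      x - log (1 + x) := by
    simp only [Finset.sum_range_one, sub_neg_eq_add]
    ring
  rwa [hterm, hsum] at h

end Real

section Expectation

variable {Ω : Type*} [MeasurableSpace Ω] {μ : Measure Ω} {X : Ω → ℝ} {ρ : ℝ}

theorem integrable_log_one_add_of_abs_le_s1 [IsFiniteMeasure μ] (hX : AEMeasurable X μ)
    (hρ : ρ < 1) (hXρ : ∀ᵐ ω ∂μ, |X ω| ≤ ρ) : Integrable (fun ω => log (1 + X ω)) μ := by
  refine .of_bound (measurable_log.comp_aemeasurable (hX.const_add 1)).aestronglyMeasurable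
    (ρ / (1 - ρ)) ?_
  filter_upwards [hXρ] with ω hω
  have := abs_nonneg (X ω)
  calc ‖log (1 + X ω)‖ ≤ |X ω| / (1 - |X ω|) := abs_log_one_add_le_s1 (hω.trans_lt hρ)
    _ ≤ ρ / (1 - ρ) := by gcongr; linarith

theorem hasSum_integral_sub_log_one_add [IsFiniteMeasure μ] (hX : AEMeasurable X μ)
    (hρ₀ : 0 ≤ ρ) (hρ₁ : ρ < 1) (hXρ : ∀ᵐ ω ∂μ, |X ω| ≤ ρ) :
    HasSum (fun n : ℕ => (-1) ^ n * ((∫ ω, X ω ^ (n + 2) ∂μ) / (n + 2)))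
      (∫ ω, (X ω - log (1 + X ω)) ∂μ) := by
  have hterm (n : ℕ) : ∫ ω, (-1) ^ n * (X ω ^ (n + 2) / (n + 2)) ∂μ =
      (-1) ^ n * ((∫ ω, X ω ^ (n + 2) ∂μ) / (n + 2)) := by
    rw [integral_const_mul, integral_div]
  simp only [← hterm]
  refine hasSum_integral_of_dominated_convergence (fun n _ => ρ ^ (n + 2)) (fun n => by fun_prop)
    (fun n => ?_) (.of_forall fun _ => ?_) (integrable_const _) ?_
  · filter_upwards [hXρ] with ω hω
    rw [norm_mul, norm_pow, norm_neg, norm_one, one_pow, one_mul, norm_div, norm_pow,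
      norm_eq_abs, norm_eq_abs, abs_of_pos (by positivity : (0 : ℝ) < n + 2)]
    calc |X ω| ^ (n + 2) / (n + 2) ≤ |X ω| ^ (n + 2) := div_le_self (by positivity) (by linarith)
      _ ≤ ρ ^ (n + 2) := by gcongr
  · exact (summable_nat_add_iff 2).mpr (summable_geometric_of_lt_one hρ₀ hρ₁)
  · filter_upwards [hXρ] with ω hω
    exact hasSum_sub_log_one_add (hω.trans_lt hρ₁)

theorem integral_sub_sq_div_two_le_integral_log_one_add [IsFiniteMeasure μ]
    (hX : AEMeasurable X μ) (hρ₀ : 0 ≤ ρ) (hρ₁ : ρ < 1) (hXρ : ∀ᵐ ω ∂μ, |X ω| ≤ ρ)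
    (hmom : Antitone fun n : ℕ => (∫ ω, X ω ^ (n + 2) ∂μ) / (n + 2)) :
    ∫ ω, X ω ∂μ - (∫ ω, X ω ^ 2 ∂μ) / 2 ≤ ∫ ω, log (1 + X ω) ∂μ := by
  have hle := hmom.le_first_of_hasSum_alternating
    (hasSum_integral_sub_log_one_add hX hρ₀ hρ₁ hXρ)
  have hXint : Integrable X μ := .of_bound hX.aestronglyMeasurable ρ hXρ
  rw [integral_sub hXint (integrable_log_one_add_of_abs_le_s1 hX hρ₁ hXρ)] at hle
  simp only [zero_add, CharP.cast_eq_zero] at hle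
  linarith

theorem log_one_add_integral_sub_variance_le_integral_log_one_add [IsProbabilityMeasure μ]
    {ε : Ω → ℝ} (hε : MemLp ε 2 μ) (hρ₀ : 0 ≤ ρ) (hρ₁ : ρ < 1) (hpos : 0 < 1 + μ[ε])
    (hdev : ∀ᵐ ω ∂μ, |ε ω - μ[ε]| ≤ ρ * (1 + μ[ε]))
    (hmom : Antitone fun n : ℕ =>
      (∫ ω, (ε ω - μ[ε]) ^ (n + 2) ∂μ) / ((n + 2) * (1 + μ[ε]) ^ (n + 2))) :
    log (1 + μ[ε]) - Var[ε; μ] / (2 * (1 + μ[ε]) ^ 2) ≤ ∫ ω, log (1 + ε ω) ∂μ := by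
  set X : Ω → ℝ := fun ω => (ε ω - μ[ε]) / (1 + μ[ε])
  have hXmeas : AEMeasurable X μ := (hε.aemeasurable.sub_const _).div_const _
  have hXρ : ∀ᵐ ω ∂μ, |X ω| ≤ ρ := by
    filter_upwards [hdev] with ω hω
    rwa [abs_div, abs_of_pos hpos, div_le_iff₀ hpos]
  have hmomX (n : ℕ) : ∫ ω, X ω ^ n ∂μ = (∫ ω, (ε ω - μ[ε]) ^ n ∂μ) / (1 + μ[ε]) ^ n := by
    simp only [X, div_pow, integral_div]
  have hmean : ∫ ω, X ω ∂μ = 0 := by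
    simp [X, integral_div, integral_sub (hε.integrable one_le_two) (integrable_const _)]
  have hvar : ∫ ω, X ω ^ 2 ∂μ = Var[ε; μ] / (1 + μ[ε]) ^ 2 := by
    rw [hmomX, variance_eq_integral hε.aemeasurable]
  have hlogX := integral_sub_sq_div_two_le_integral_log_one_add hXmeas hρ₀ hρ₁ hXρ <| by
    convert hmom using 2 with n
    rw [hmomX, div_div, mul_comm]
  have hsplit : ∫ ω, log (1 + ε ω) ∂μ = log (1 + μ[ε]) + ∫ ω, log (1 + X ω) ∂μ := calc
    _ = ∫ ω, (log (1 + μ[ε]) + log (1 + X ω)) ∂μ := by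
      refine integral_congr_ae ?_
      filter_upwards [hXρ] with ω hω
      have h1X : 0 < 1 + X ω := by linarith [neg_abs_le (X ω)]
      rw [← log_mul hpos.ne' h1X.ne']
      congr 1
      rw [mul_add, mul_one, mul_div_cancel₀ _ hpos.ne']
      ring
    _ = _ := by
      rw [integral_add (integrable_const _) (integrable_log_one_add_of_abs_le_s1 hXmeas hρ₁ hXρ)]
      simp
  rw [hmean, hvar, div_div, mul_comm] at hlogX
  linarith

theorem integrable_log_one_add {Y : Ω → ℝ} (hY₀ : ∀ᵐ ω ∂μ, 0 ≤ Y ω) (hY : Integrable Y μ) :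
    Integrable (fun ω => log (1 + Y ω)) μ := by
  refine hY.mono'
    (measurable_log.comp_aemeasurable (hY.aemeasurable.const_add 1)).aestronglyMeasurable ?_
  filter_upwards [hY₀] with ω hω
  rw [norm_eq_abs, abs_of_nonneg (log_nonneg (by linarith))]
  linarith [log_le_sub_one_of_pos (by linarith : 0 < 1 + Y ω)]

theorem integral_log_one_add_le_log_one_add_integral [IsProbabilityMeasure μ]
    {Y : Ω → ℝ} (hY₀ : ∀ᵐ ω ∂μ, 0 ≤ Y ω) (hY : Integrable Y μ) :
    ∫ ω, log (1 + Y ω) ∂μ ≤ log (1 + ∫ ω, Y ω ∂μ) := by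
  have hconc : ConcaveOn ℝ (Set.Ici 0) fun y : ℝ => log (1 + y) :=
    (strictConcaveOn_log_Ioi.concaveOn.translate_right 1).subset
      (fun y (hy : 0 ≤ y) => show 0 < 1 + y by linarith) (convex_Ici 0)
  have hcont : ContinuousOn (fun y : ℝ => log (1 + y)) (Set.Ici 0) :=
    (continuousOn_const.add continuousOn_id).log fun y (hy : 0 ≤ y) =>
      (add_pos_of_pos_of_nonneg one_pos hy).ne'
  exact hconc.le_map_integral hcont isClosed_Ici hY₀ hY (integrable_log_one_add hY₀ hY)

end Expectation

theorem ergodic_rate_constraint_guarantee_general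
    {Ω : Type*} [MeasureSpace Ω] [IsProbabilityMeasure (ℙ : Measure Ω)]
    (ε₁ ε₂ : Ω → ℝ)
    (hε₁0 : ∀ᵐ ω ∂ℙ, 0 ≤ ε₁ ω) (hε₂0 : ∀ᵐ ω ∂ℙ, 0 ≤ ε₂ ω)
    (hL2 : MemLp ε₁ 2 ℙ) (hε₂int : Integrable ε₂ ℙ)
    (μ₁ μ₂ σ1sq : ℝ) (hμ₁ : μ₁ = ∫ ω, ε₁ ω ∂ℙ) (hμ₂ : μ₂ = ∫ ω, ε₂ ω ∂ℙ)
    (hσ1sq : σ1sq = variance ε₁ ℙ)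
    (hρ : ∃ ρ : ℝ, ρ ∈ Set.Ioo (0 : ℝ) 1 ∧ ∀ᵐ ω ∂ℙ, |ε₁ ω - μ₁| ≤ ρ * (1 + μ₁))
    (hc_anti : ∀ n : ℕ, 2 ≤ n →
      (∫ ω, (ε₁ ω - μ₁) ^ (n + 1) ∂ℙ) / ((n + 1) * (1 + μ₁) ^ (n + 1)) ≤
        (∫ ω, (ε₁ ω - μ₁) ^ n ∂ℙ) / (n * (1 + μ₁) ^ n))
    (R : ℝ)
    (hsurrogate : logb 2 (1 + μ₁) - logb 2 (Real.exp 1) * σ1sq / (2 * (1 + μ₁) ^ 2)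
        - logb 2 (1 + μ₂) ≥ R) :
    (∫ ω, (logb 2 (1 + ε₁ ω) - logb 2 (1 + ε₂ ω)) ∂ℙ) ≥ R := by
  obtain ⟨ρ, ⟨hρ₀, hρ₁⟩, hdev⟩ := hρ
  have hmom : Antitone fun n : ℕ =>
      (∫ ω, (ε₁ ω - μ₁) ^ (n + 2) ∂ℙ) / ((n + 2) * (1 + μ₁) ^ (n + 2)) :=
    antitone_nat_of_succ_le fun n => by
      have h := hc_anti (n + 2) (by omega)
      rw [show n + 1 + 2 = n + 2 + 1 by ring]
      push_cast at h ⊢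
      rwa [add_right_comm (n : ℝ) 1 2]
  have h₁ : log (1 + μ₁) - σ1sq / (2 * (1 + μ₁) ^ 2) ≤ ∫ ω, log (1 + ε₁ ω) ∂ℙ := by
    subst hμ₁ hσ1sq
    exact log_one_add_integral_sub_variance_le_integral_log_one_add hL2 hρ₀.le hρ₁
      (by linarith [integral_nonneg_of_ae hε₁0]) hdev hmom
  have h₂ : ∫ ω, log (1 + ε₂ ω) ∂ℙ ≤ log (1 + μ₂) :=
    hμ₂ ▸ integral_log_one_add_le_log_one_add_integral hε₂0 hε₂int
  calc R ≤ (log (1 + μ₁) - σ1sq / (2 * (1 + μ₁) ^ 2) - log (1 + μ₂)) / log 2 := by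
        convert hsurrogate using 1
        simp only [logb, log_exp]
        ring
    _ ≤ (∫ ω, log (1 + ε₁ ω) ∂ℙ - ∫ ω, log (1 + ε₂ ω) ∂ℙ) / log 2 := by
        gcongr
    _ = ∫ ω, (logb 2 (1 + ε₁ ω) - logb 2 (1 + ε₂ ω)) ∂ℙ := by
        rw [← integral_sub (integrable_log_one_add hε₁0 (hL2.integrable one_le_two))
          (integrable_log_one_add hε₂0 hε₂int), ← integral_div]
        simp only [logb, sub_div]

/-- Guarantee underlying Theorem 1: if the deterministic surrogate
`log₂(1+μ₁) − (log₂ e)σ₁²/(2(1+μ₁)²) − log₂(1+μ₂)` dominates the target rate `R`,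
then the true ergodic rate `E[log₂(1+ε₁) − log₂(1+ε₂)]` is at least `R`. -/
theorem ergodic_rate_constraint_guarantee
    {Ω : Type*} [MeasureSpace Ω] [IsProbabilityMeasure (ℙ : Measure Ω)]
    (ε₁ ε₂ : Ω → ℝ) (hε₁meas : AEMeasurable ε₁ ℙ) (hε₂meas : AEMeasurable ε₂ ℙ)
    (hε₁0 : ∀ᵐ ω ∂ℙ, 0 ≤ ε₁ ω) (hε₂0 : ∀ᵐ ω ∂ℙ, 0 ≤ ε₂ ω)
    (hL2 : MemLp ε₁ 2 ℙ) (hε₂int : Integrable ε₂ ℙ)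
    (μ₁ μ₂ σ1sq : ℝ) (hμ₁ : μ₁ = ∫ ω, ε₁ ω ∂ℙ) (hμ₂ : μ₂ = ∫ ω, ε₂ ω ∂ℙ)
    (hσ1sq : σ1sq = variance ε₁ ℙ)
    (hρ : ∃ ρ : ℝ, ρ ∈ Set.Ioo (0 : ℝ) 1 ∧ ∀ᵐ ω ∂ℙ, |ε₁ ω - μ₁| ≤ ρ * (1 + μ₁))
    (hc_nonneg : ∀ n : ℕ, 2 ≤ n →
      0 ≤ (∫ ω, (ε₁ ω - μ₁) ^ n ∂ℙ) / (n * (1 + μ₁) ^ n))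
    (hc_anti : ∀ n : ℕ, 2 ≤ n →
      (∫ ω, (ε₁ ω - μ₁) ^ (n + 1) ∂ℙ) / ((n + 1) * (1 + μ₁) ^ (n + 1)) ≤
        (∫ ω, (ε₁ ω - μ₁) ^ n ∂ℙ) / (n * (1 + μ₁) ^ n))
    (R : ℝ) (hR : 0 ≤ R)
    (hsurrogate : logb 2 (1 + μ₁) - logb 2 (Real.exp 1) * σ1sq / (2 * (1 + μ₁) ^ 2)
        - logb 2 (1 + μ₂) ≥ R) :
    (∫ ω, (logb 2 (1 + ε₁ ω) - logb 2 (1 + ε₂ ω)) ∂ℙ) ≥ R :=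
  ergodic_rate_constraint_guarantee_general ε₁ ε₂ hε₁0 hε₂0 hL2 hε₂int μ₁ μ₂ σ1sq hμ₁ hμ₂ hσ1sq hρ
    hc_anti R hsurrogate
end

section
/- Let P_c, P_p > 0, α₁ ∈ [0,1), and set σ̂² = (1−α₁)P_c. Let H₂₁ and H₂₂ be independent circularly symmetric complex Gaussian random variables with H₂ⱼ ~ CN(μ₂ⱼ, σ₂ⱼ²) and |μ₂ⱼ|² + σ₂ⱼ² = 1 for j = 1,2, and set H_s = H₂₁ + √(α₁P_c/P_p)·H₂₂. Define F : ℂ → ℝ by F(α₂) = σ̂²·P_p·E[|H_s − α₂H₂₂|²] + σ̂² + |α₂|²P_p. Then F is a strictly convex function of α₂ (viewed as a function on ℝ²) and attains its unique global minimum at α₂ = (μ₂₂*·μ₂₁ + √(α₁P_c/P_p))·(1−α₁)P_c / ((1−α₁)P_c + 1). -/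
/-!
Writing `H₂ⱼ = μ₂ⱼ + σ₂ⱼ(ξ + iη)/√2`, the variable `Hs − α₂H₂₂` is a constant plus a real-linear
combination of four independent standard Gaussians, so its second moment is
`|mean|² + Σ |coefficient|²`. Because `|μ₂₂|² + σ₂₂² = 1`, this equals `|α₂ − β|² + const` with
`β = √(α₁P_c/P_p) + μ₂₂*μ₂₁`. Completing the square once more,
`F(α₂) = P_p(σ̂²|α₂ − β|² + |α₂|²) + const = P_p(σ̂² + 1)|α₂ − α⋆|² + const`, and a positive
multiple of a squared distance is strongly, hence strictly, convex with its unique minimum at the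
centre.
-/

open MeasureTheory ProbabilityTheory
open scoped NNReal

section SecondMoments

variable {Ω ι : Type*} {mΩ : MeasurableSpace Ω} {P : Measure Ω} [IsProbabilityMeasure P]

lemma integral_const_add_sq {Y : Ω → ℝ} (hY : MemLp Y 2 P) (hmean : P[Y] = 0) (a : ℝ) :
    ∫ ω, (a + Y ω) ^ 2 ∂P = a ^ 2 + Var[Y; P] := by
  have h := variance_eq_sub ((memLp_const a).add hY)
  rw [show (fun _ => a) + Y = fun ω => a + Y ω from rfl,
    variance_const_add hY.aestronglyMeasurable,
    integral_add (integrable_const a) (hY.integrable one_le_two), hmean] at h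
  simp only [Pi.pow_apply, integral_const, probReal_univ, smul_eq_mul, one_mul, add_zero] at h
  linarith

variable [Fintype ι] {X : ι → Ω → ℝ}

lemma integral_sq_const_add_sum_mul (hX : ∀ i, MemLp (X i) 2 P)
    (hindep : Pairwise fun i j => X i ⟂ᵢ[P] X j) (hmean : ∀ i, P[X i] = 0) (a : ℝ) (c : ι → ℝ) :
    ∫ ω, (a + ∑ i, c i * X i ω) ^ 2 ∂P = a ^ 2 + ∑ i, c i ^ 2 * Var[X i; P] := by
  have hcX (i : ι) : MemLp (c i • X i) 2 P := (hX i).const_smul (c i)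
  have hY_mean : P[∑ i, c i • X i] = 0 := by
    simp only [Finset.sum_apply]
    rw [integral_finsetSum _ fun i _ => (hcX i).integrable one_le_two]
    simp [integral_const_mul, hmean]
  have hY_var : Var[∑ i, c i • X i; P] = ∑ i, c i ^ 2 * Var[X i; P] := by
    rw [IndepFun.variance_sum (fun i _ => hcX i) fun i _ j _ hij =>
      (hindep hij).comp (measurable_const_mul (c i)) (measurable_const_mul (c j))]
    simp only [variance_smul]
  simpa [hY_var] using integral_const_add_sq (memLp_finsetSum' _ fun i _ => hcX i) hY_mean a

lemma integral_norm_sq_const_add_sum_mul (hX : ∀ i, MemLp (X i) 2 P)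
    (hindep : Pairwise fun i j => X i ⟂ᵢ[P] X j) (hmean : ∀ i, P[X i] = 0) (m : ℂ) (z : ι → ℂ) :
    ∫ ω, ‖m + ∑ i, z i * X i ω‖ ^ 2 ∂P = ‖m‖ ^ 2 + ∑ i, ‖z i‖ ^ 2 * Var[X i; P] := by
  have hre_im (w : ℂ) : ‖w‖ ^ 2 = w.re ^ 2 + w.im ^ 2 := by
    rw [Complex.sq_norm, Complex.normSq_apply]; ring
  have hsq (ω : Ω) : ‖m + ∑ i, z i * X i ω‖ ^ 2
      = (m.re + ∑ i, (z i).re * X i ω) ^ 2 + (m.im + ∑ i, (z i).im * X i ω) ^ 2 := by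
    simp [hre_im, Complex.re_sum, Complex.im_sum]
  have hL2 (a : ℝ) (c : ι → ℝ) : MemLp (fun ω => a + ∑ i, c i * X i ω) 2 P :=
    (memLp_const a).add (memLp_finsetSum _ fun i _ => (hX i).const_mul (c i))
  simp_rw [hsq]
  rw [integral_add (hL2 _ _).integrable_sq (hL2 _ _).integrable_sq,
    integral_sq_const_add_sum_mul hX hindep hmean, integral_sq_const_add_sum_mul hX hindep hmean,
    hre_im m]
  simp only [hre_im, add_mul, Finset.sum_add_distrib]
  ring

end SecondMoments

namespace ProbabilityTheory

variable {Ω : Type*} {mΩ : MeasurableSpace Ω} {P : Measure Ω} {X : Ω → ℝ} {m : ℝ} {v : ℝ≥0}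

lemma HasLaw.memLp_of_gaussianReal (hX : HasLaw X (gaussianReal m v) P) (p : ℝ≥0) :
    MemLp X p P :=
  (memLp_map_measure_iff aestronglyMeasurable_id hX.aemeasurable).1
    (hX.map_eq ▸ memLp_id_gaussianReal p)

lemma HasLaw.integral_of_gaussianReal (hX : HasLaw X (gaussianReal m v) P) : P[X] = m :=
  hX.integral_eq.trans integral_id_gaussianReal

lemma HasLaw.variance_of_gaussianReal (hX : HasLaw X (gaussianReal m v) P) : Var[X; P] = v :=
  hX.variance_eq.trans variance_id_gaussianReal

end ProbabilityTheory

lemma norm_sq_add_mul_add_norm_sq_mul {μ₁ μ₂ : ℂ} {σ₂ : ℝ} (h : ‖μ₂‖ ^ 2 + σ₂ ^ 2 = 1) (u : ℂ) :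
    ‖μ₁ + u * μ₂‖ ^ 2 + ‖u‖ ^ 2 * σ₂ ^ 2
      = ‖u + (starRingEnd ℂ) μ₂ * μ₁‖ ^ 2 + ‖μ₁‖ ^ 2 * σ₂ ^ 2 := by
  rw [show σ₂ ^ 2 = 1 - ‖μ₂‖ ^ 2 by linarith]
  simp only [Complex.sq_norm, Complex.normSq_apply, Complex.add_re, Complex.add_im,
    Complex.mul_re, Complex.mul_im, Complex.conj_re, Complex.conj_im]
  ring

lemma mul_norm_sub_sq_add_norm_sq {E : Type*} [NormedAddCommGroup E] [InnerProductSpace ℝ E]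
    {K : ℝ} (hK : K + 1 ≠ 0) (x y : E) :
    K * ‖x - y‖ ^ 2 + ‖x‖ ^ 2 = (K + 1) * ‖x - (K / (K + 1)) • y‖ ^ 2 + K / (K + 1) * ‖y‖ ^ 2 := by
  rw [norm_sub_sq_real, norm_sub_sq_real, inner_smul_right, norm_smul, mul_pow,
    Real.norm_eq_abs, sq_abs]
  field_simp
  ring

section Convex

variable {E : Type*} [NormedAddCommGroup E] [InnerProductSpace ℝ E]

lemma strongConvexOn_mul_norm_sub_sq_add (A : ℝ) (y : E) (C : ℝ) :
    StrongConvexOn Set.univ (2 * A) fun x : E => A * ‖x - y‖ ^ 2 + C := by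
  have haffine : (fun x : E => A * ‖x - y‖ ^ 2 + C - 2 * A / 2 * ‖x‖ ^ 2)
      = fun x => (-2 * A) • innerₛₗ ℝ y x + (A * ‖y‖ ^ 2 + C) := by
    ext x
    simp only [norm_sub_sq_real, innerₛₗ_apply_apply, real_inner_comm x y, smul_eq_mul]
    ring
  rw [strongConvexOn_iff_convex, haffine]
  exact (((-2 * A) • innerₛₗ ℝ y).convexOn convex_univ).add (convexOn_const _ convex_univ)

end Convex

lemma integral_norm_sq_mul_add_mul_circularGaussian {Ω : Type*} {mΩ : MeasurableSpace Ω}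
    {P : Measure Ω} [IsProbabilityMeasure P] {g : Fin 4 → Ω → ℝ}
    (hlaw : ∀ i, HasLaw (g i) (gaussianReal 0 1) P) (hindep : Pairwise fun i j => g i ⟂ᵢ[P] g j)
    (μ₁ μ₂ : ℂ) (σ₁ σ₂ : ℝ) (u v : ℂ) :
    ∫ ω, ‖u * (μ₁ + σ₁ * (g 0 ω + Complex.I * g 1 ω) / (Real.sqrt 2 : ℂ))
        + v * (μ₂ + σ₂ * (g 2 ω + Complex.I * g 3 ω) / (Real.sqrt 2 : ℂ))‖ ^ 2 ∂P
      = ‖u * μ₁ + v * μ₂‖ ^ 2 + ‖u‖ ^ 2 * σ₁ ^ 2 + ‖v‖ ^ 2 * σ₂ ^ 2 := by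
  set z : Fin 4 → ℂ := ![u * σ₁ / Real.sqrt 2, u * σ₁ * Complex.I / Real.sqrt 2,
    v * σ₂ / Real.sqrt 2, v * σ₂ * Complex.I / Real.sqrt 2]
  have hlin (ω : Ω) : u * (μ₁ + σ₁ * (g 0 ω + Complex.I * g 1 ω) / (Real.sqrt 2 : ℂ))
      + v * (μ₂ + σ₂ * (g 2 ω + Complex.I * g 3 ω) / (Real.sqrt 2 : ℂ))
      = (u * μ₁ + v * μ₂) + ∑ i, z i * g i ω := by
    simp only [Fin.sum_univ_four, Matrix.cons_val_zero, Matrix.cons_val_one, Matrix.cons_val, z]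
    ring
  simp_rw [hlin]
  rw [integral_norm_sq_const_add_sum_mul (fun i => (hlaw i).memLp_of_gaussianReal 2) hindep
    (fun i => (hlaw i).integral_of_gaussianReal)]
  simp only [(hlaw _).variance_of_gaussianReal, NNReal.coe_one, mul_one, Fin.sum_univ_four,
    Matrix.cons_val_zero, Matrix.cons_val_one, Matrix.cons_val, Complex.norm_div, Complex.norm_mul,
    Complex.norm_real, Complex.norm_I, Real.norm_eq_abs, div_pow, mul_pow, sq_abs,
    Real.sq_sqrt zero_le_two, add_halves, z]
  ring

theorem fast_fading_precoding_coefficient_general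
    {Ω : Type*} [MeasureSpace Ω] [IsProbabilityMeasure (ℙ : Measure Ω)]
    (Pc Pp α₁ : ℝ) (hPc : 0 < Pc) (hPp : 0 < Pp) (hα₁ : α₁ ∈ Set.Ico (0 : ℝ) 1)
    (μ21 μ22 : ℂ) (σ21 σ22 : ℝ)
    (hnorm22 : ‖μ22‖ ^ 2 + σ22 ^ 2 = 1)
    (g : Fin 4 → Ω → ℝ)
    (hindep : iIndepFun g ℙ)
    (hgauss : ∀ i, Measure.map (g i) ℙ = gaussianReal 0 1)
    (H21 H22 : Ω → ℂ)
    (hH21 : H21 = fun ω => μ21 + (σ21 : ℂ) * (g 0 ω + Complex.I * g 1 ω) / (Real.sqrt 2 : ℂ))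
    (hH22 : H22 = fun ω => μ22 + (σ22 : ℂ) * (g 2 ω + Complex.I * g 3 ω) / (Real.sqrt 2 : ℂ))
    (Hs : Ω → ℂ)
    (hHs : Hs = fun ω => H21 ω + (Real.sqrt (α₁ * Pc / Pp) : ℂ) * H22 ω)
    (F : ℂ → ℝ)
    (hF : F = fun α₂ => (1 - α₁) * Pc * Pp * (∫ ω, ‖Hs ω - α₂ * H22 ω‖ ^ 2 ∂ℙ)
        + (1 - α₁) * Pc + ‖α₂‖ ^ 2 * Pp)
    (αstar : ℂ)
    (hαstar : αstar = ((starRingEnd ℂ) μ22 * μ21 + (Real.sqrt (α₁ * Pc / Pp) : ℂ)) *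
        (((1 - α₁) * Pc : ℝ) : ℂ) / ((((1 - α₁) * Pc : ℝ) : ℂ) + 1)) :
    StrictConvexOn ℝ Set.univ F ∧ ∀ z : ℂ, z ≠ αstar → F αstar < F z := by
  set K := (1 - α₁) * Pc
  set c := Real.sqrt (α₁ * Pc / Pp)
  set β : ℂ := c + (starRingEnd ℂ) μ22 * μ21
  have hK : 0 ≤ K := mul_nonneg (by linarith [hα₁.2]) hPc.le
  -- `Measure.map` of a non-`AEMeasurable` map is `0`, so the law alone gives measurability.
  have hlaw (i : Fin 4) : HasLaw (g i) (gaussianReal 0 1) ℙ :=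
    ⟨.of_map_ne_zero (hgauss i ▸ IsProbabilityMeasure.ne_zero _), hgauss i⟩
  have hmean_sq (α : ℂ) : ∫ ω, ‖Hs ω - α * H22 ω‖ ^ 2 ∂ℙ
      = ‖μ21 + (c - α) * μ22‖ ^ 2 + σ21 ^ 2 + ‖c - α‖ ^ 2 * σ22 ^ 2 := by
    have h := integral_norm_sq_mul_add_mul_circularGaussian hlaw (fun i j hij => hindep.indepFun hij)
      μ21 μ22 σ21 σ22 1 (c - α)
    simp only [one_mul, norm_one, one_pow] at h
    rw [← h, hHs, hH21, hH22]
    congr with ω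
    ring_nf
  have hαstar_smul : αstar = (K / (K + 1)) • β := by
    rw [hαstar, Complex.real_smul]
    push_cast
    ring
  have hF_sq : F = fun α => Pp * (K + 1) * ‖α - αstar‖ ^ 2
      + (Pp * (K / (K + 1) * ‖β‖ ^ 2 + K * (‖μ21‖ ^ 2 * σ22 ^ 2 + σ21 ^ 2)) + K) := by
    ext α
    have hcompl := norm_sq_add_mul_add_norm_sq_mul (μ₁ := μ21) hnorm22 (c - α)
    have hsq := mul_norm_sub_sq_add_norm_sq (by positivity : K + 1 ≠ 0) α β
    rw [show c - α + (starRingEnd ℂ) μ22 * μ21 = -(α - β) by ring, norm_neg] at hcompl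
    simp only [hF, hmean_sq, hαstar_smul]
    linear_combination K * Pp * hcompl + Pp * hsq
  refine ⟨hF_sq ▸ (strongConvexOn_mul_norm_sub_sq_add _ αstar _).strictConvexOn (by positivity),
    fun z hz => ?_⟩
  have hdist : 0 < ‖z - αstar‖ := norm_pos_iff.mpr (sub_ne_zero.mpr hz)
  simp only [hF_sq, sub_self, norm_zero]
  gcongr

/-- Proposition 1 of the paper: with `H₂₁, H₂₂` independent circularly symmetric complex
Gaussians (each written as `μ + σ(ξ + iη)/√2` with all real Gaussian components
independent standard normals), the expected denominator
`F(α₂) = σ̂²·P_p·E[|H_s − α₂H₂₂|²] + σ̂² + |α₂|²P_p` is strictly convex in `α₂ ∈ ℂ ≅ ℝ²`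
and has its unique global minimum at
`α₂ = (μ₂₂*·μ₂₁ + √(α₁P_c/P_p))·(1−α₁)P_c / ((1−α₁)P_c + 1)`. -/
theorem fast_fading_precoding_coefficient
    {Ω : Type*} [MeasureSpace Ω] [IsProbabilityMeasure (ℙ : Measure Ω)]
    (Pc Pp α₁ : ℝ) (hPc : 0 < Pc) (hPp : 0 < Pp) (hα₁ : α₁ ∈ Set.Ico (0 : ℝ) 1)
    (μ21 μ22 : ℂ) (σ21 σ22 : ℝ)
    (hnorm21 : ‖μ21‖ ^ 2 + σ21 ^ 2 = 1)
    (hnorm22 : ‖μ22‖ ^ 2 + σ22 ^ 2 = 1)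
    (g : Fin 4 → Ω → ℝ) (hgmeas : ∀ i, Measurable (g i))
    (hindep : iIndepFun g ℙ)
    (hgauss : ∀ i, Measure.map (g i) ℙ = gaussianReal 0 1)
    (H21 H22 : Ω → ℂ)
    (hH21 : H21 = fun ω => μ21 + (σ21 : ℂ) * (g 0 ω + Complex.I * g 1 ω) / (Real.sqrt 2 : ℂ))
    (hH22 : H22 = fun ω => μ22 + (σ22 : ℂ) * (g 2 ω + Complex.I * g 3 ω) / (Real.sqrt 2 : ℂ))
    (Hs : Ω → ℂ)
    (hHs : Hs = fun ω => H21 ω + (Real.sqrt (α₁ * Pc / Pp) : ℂ) * H22 ω)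
    (F : ℂ → ℝ)
    (hF : F = fun α₂ => (1 - α₁) * Pc * Pp * (∫ ω, ‖Hs ω - α₂ * H22 ω‖ ^ 2 ∂ℙ)
        + (1 - α₁) * Pc + ‖α₂‖ ^ 2 * Pp)
    (αstar : ℂ)
    (hαstar : αstar = ((starRingEnd ℂ) μ22 * μ21 + (Real.sqrt (α₁ * Pc / Pp) : ℂ)) *
        (((1 - α₁) * Pc : ℝ) : ℂ) / ((((1 - α₁) * Pc : ℝ) : ℂ) + 1)) :
    StrictConvexOn ℝ Set.univ F ∧ ∀ z : ℂ, z ≠ αstar → F αstar < F z :=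
  fast_fading_precoding_coefficient_general Pc Pp α₁ hPc hPp hα₁ μ21 μ22 σ21 σ22 hnorm22 g hindep
    hgauss H21 H22 hH21 hH22 Hs hHs F hF αstar hαstar
end

section
/- Let λ₁, λ₂ ≥ 0 and let G₁, G₂ be independent circularly symmetric complex Gaussian random variables with Gⱼ ~ CN(mⱼ, sⱼ²). Set X = λ₁|G₁|² + λ₂|G₂|². Then for every positive integer n, the central moment E[(X − E[X])^n] is nonnegative. -/
/-!
After subtracting the mean, `X - E X = ∑ᵢ qᵢ(gᵢ)` with `qᵢ = aᵢ (x² - 1) + bᵢ x`, `aᵢ ≥ 0`, and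
`gᵢ` independent standard Gaussians. Binomial expansion and independence reduce the claim to
`E[q(g)ᵏ] ≥ 0` for a single such `q`. Stein's identity `E[g p(g)] = E[p'(g)]`, together with
`q'² = 4a q + 4a² + b²`, gives for `Mₖ = E[qᵏ]` and `Pₖ = b E[qᵏ q']` the recursions
`2 Mₖ₊₂ = (k + 1) (4a Mₖ₊₁ + (4a² + b²) Mₖ + Pₖ)` and `Pₖ₊₁ = 2a (k + 1) Pₖ + b² Mₖ₊₁`,
whose coefficients are nonnegative; since `M₀ = 1`, `M₁ = 0` and `P₀ = b²`, all `Mₖ` are `≥ 0`.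
-/

open MeasureTheory ProbabilityTheory
open scoped NNReal

namespace ProbabilityTheory

open Polynomial

lemma integrable_pow_gaussianReal (μ : ℝ) (v : ℝ≥0) (n : ℕ) :
    Integrable (fun x => x ^ n) (gaussianReal μ v) :=
  (integrable_norm_iff (by fun_prop)).1 <| by
    simpa [norm_pow] using (memLp_id_gaussianReal (μ := μ) (v := v) n).integrable_norm_pow'

lemma integrable_eval_gaussianReal (μ : ℝ) (v : ℝ≥0) (p : ℝ[X]) :
    Integrable (fun x => p.eval x) (gaussianReal μ v) := by
  induction p using Polynomial.induction_on' with
  | add p q hp hq => simp only [eval_add]; exact hp.add hq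
  | monomial n a => simpa using (integrable_pow_gaussianReal μ v n).const_mul a

noncomputable def gaussianExpectation (μ : ℝ) (v : ℝ≥0) : ℝ[X] →ₗ[ℝ] ℝ where
  toFun p := ∫ x, p.eval x ∂gaussianReal μ v
  map_add' p q := by
    simpa using integral_add (integrable_eval_gaussianReal μ v p)
      (integrable_eval_gaussianReal μ v q)
  map_smul' a p := by simpa using integral_const_mul a _

lemma gaussianExpectation_apply (μ : ℝ) (v : ℝ≥0) (p : ℝ[X]) :
    gaussianExpectation μ v p = ∫ x, p.eval x ∂gaussianReal μ v := rfl

@[simp]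
lemma gaussianExpectation_C_mul (μ : ℝ) (v : ℝ≥0) (a : ℝ) (p : ℝ[X]) :
    gaussianExpectation μ v (C a * p) = a * gaussianExpectation μ v p := by
  rw [← smul_eq_C_mul, map_smul, smul_eq_mul]

@[simp]
lemma gaussianExpectation_one (μ : ℝ) (v : ℝ≥0) : gaussianExpectation μ v 1 = 1 := by
  simp [gaussianExpectation_apply]

@[simp]
lemma gaussianExpectation_C (μ : ℝ) (v : ℝ≥0) (a : ℝ) : gaussianExpectation μ v (C a) = a := by
  simpa using gaussianExpectation_C_mul μ v a 1

lemma hasDerivAt_gaussianPDFReal_zero_one (x : ℝ) :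
    HasDerivAt (gaussianPDFReal 0 1) (-x * gaussianPDFReal 0 1 x) x := by
  have hφ : gaussianPDFReal 0 1 = fun y => (√(2 * Real.pi))⁻¹ * Real.exp (-y ^ 2 / 2) := by
    ext y; simp [gaussianPDFReal_def]
  have h : HasDerivAt (fun y : ℝ => -y ^ 2 / 2) (-x) x :=
    ((hasDerivAt_pow 2 x).neg.div_const 2).congr_deriv (by ring)
  rw [hφ]
  exact (h.exp.const_mul _).congr_deriv (by ring)

lemma integrable_gaussianPDFReal_mul {μ : ℝ} {v : ℝ≥0} (hv : v ≠ 0) {f : ℝ → ℝ}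
    (hf : Integrable f (gaussianReal μ v)) :
    Integrable (fun x => gaussianPDFReal μ v x * f x) := by
  rw [gaussianReal_of_var_ne_zero _ hv, integrable_withDensity_iff_integrable_smul'
    (measurable_gaussianPDF μ v) (ae_of_all _ fun _ => gaussianPDF_lt_top)] at hf
  simpa [toReal_gaussianPDF] using hf

section Stein

local notation "γ" => gaussianExpectation 0 1

lemma gaussianExpectation_X_mul (p : ℝ[X]) : γ (X * p) = γ (derivative p) := by
  set φ := gaussianPDFReal 0 1
  have hint (q : ℝ[X]) : Integrable (fun x => φ x * q.eval x) :=
    integrable_gaussianPDFReal_mul one_ne_zero (integrable_eval_gaussianReal 0 1 q)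
  have hderiv (x : ℝ) : HasDerivAt (fun y => φ y * p.eval y)
      (φ x * (derivative p).eval x - φ x * (X * p).eval x) x :=
    ((hasDerivAt_gaussianPDFReal_zero_one x).mul (p.hasDerivAt x)).congr_deriv
      (by simp only [eval_mul, eval_X]; ring)
  have h := integral_eq_zero_of_hasDerivAt_of_integrable hderiv
    ((hint (derivative p)).sub (hint (X * p))) (hint p)
  rw [integral_sub (hint _) (hint _), sub_eq_zero] at h
  simp only [gaussianExpectation_apply, integral_gaussianReal_eq_integral_smul one_ne_zero,
    smul_eq_mul]
  exact h.symm

@[simp]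
lemma gaussianExpectation_X : γ X = 0 := by
  simpa using gaussianExpectation_X_mul 1

lemma gaussianExpectation_X_mul_pow_succ (p : ℝ[X]) (k : ℕ) :
    γ (X * p ^ (k + 1)) = (k + 1) * γ (p ^ k * derivative p) := by
  rw [gaussianExpectation_X_mul, derivative_pow_succ, mul_assoc, gaussianExpectation_C_mul]

noncomputable def centeredQuadratic (a b : ℝ) : ℝ[X] := C a * (X ^ 2 - 1) + C b * X

variable (a b : ℝ)

local notation "q" => centeredQuadratic a b

lemma derivative_centeredQuadratic : derivative q = C (2 * a) * X + C b := by
  simp [centeredQuadratic, C_mul, C_ofNat]; ring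

lemma derivative_centeredQuadratic_sq :
    derivative q ^ 2 = 4 * C a * q + (4 * C a ^ 2 + C b ^ 2) := by
  rw [derivative_centeredQuadratic, centeredQuadratic]; simp only [map_mul, map_ofNat]; ring

lemma gaussianExpectation_centeredQuadratic_mul (p : ℝ[X]) :
    γ (q * p) = γ ((C a * X + C b) * derivative p) := by
  have h : q * p = C a * (X * (X * p)) - C a * p + C b * (X * p) := by
    rw [centeredQuadratic]; ring
  rw [h, add_mul, map_add, map_add, map_sub, mul_assoc]
  simp only [gaussianExpectation_C_mul, gaussianExpectation_X_mul, derivative_mul, derivative_X,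
    one_mul, map_add]
  ring

lemma gaussianExpectation_centeredQuadratic : γ q = 0 := by
  simpa using gaussianExpectation_centeredQuadratic_mul a b 1

lemma two_mul_gaussianExpectation_centeredQuadratic_pow_add_two (k : ℕ) :
    2 * γ (q ^ (k + 2)) = (k + 1) * (4 * a * γ (q ^ (k + 1)) + (4 * a ^ 2 + b ^ 2) * γ (q ^ k)
      + b * γ (q ^ k * derivative q)) := by
  have hpoly : C 2 * ((C a * X + C b) * (q ^ k * derivative q))
      = C (4 * a) * q ^ (k + 1) + C (4 * a ^ 2 + b ^ 2) * q ^ k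
        + C b * (q ^ k * derivative q) := by
    have hd := derivative_centeredQuadratic a b
    have hsq := derivative_centeredQuadratic_sq a b
    simp only [map_add, map_mul, map_pow, map_ofNat, pow_succ] at hd hsq ⊢
    linear_combination q ^ k * hsq - q ^ k * derivative q * hd
  have hexp := congrArg γ hpoly
  rw [gaussianExpectation_C_mul, map_add, map_add, gaussianExpectation_C_mul,
    gaussianExpectation_C_mul, gaussianExpectation_C_mul] at hexp
  have hderiv : (C a * X + C b) * derivative (q ^ (k + 1))
      = C ((k : ℝ) + 1) * ((C a * X + C b) * (q ^ k * derivative q)) := by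
    rw [derivative_pow_succ]; ring
  rw [pow_succ', gaussianExpectation_centeredQuadratic_mul, hderiv, gaussianExpectation_C_mul]
  linear_combination ((k : ℝ) + 1) * hexp

lemma gaussianExpectation_centeredQuadratic_pow_succ_mul_derivative (k : ℕ) :
    b * γ (q ^ (k + 1) * derivative q)
      = 2 * a * (k + 1) * (b * γ (q ^ k * derivative q)) + b ^ 2 * γ (q ^ (k + 1)) := by
  have h : q ^ (k + 1) * derivative q = C (2 * a) * (X * q ^ (k + 1)) + C b * q ^ (k + 1) := by
    rw [derivative_centeredQuadratic]; ring
  rw [h, map_add, gaussianExpectation_C_mul, gaussianExpectation_C_mul,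
    gaussianExpectation_X_mul_pow_succ]
  ring

lemma gaussianExpectation_centeredQuadratic_pow_nonneg (ha : 0 ≤ a) (k : ℕ) :
    0 ≤ γ (q ^ k) := by
  suffices ∀ k : ℕ, 0 ≤ γ (q ^ k) ∧ 0 ≤ γ (q ^ (k + 1)) ∧ 0 ≤ b * γ (q ^ k * derivative q) from
    (this k).1
  intro k
  induction k with
  | zero =>
    refine ⟨by simp, by simp [gaussianExpectation_centeredQuadratic], ?_⟩
    simpa [derivative_centeredQuadratic, mul_assoc] using mul_self_nonneg b
  | succ k ih =>
    obtain ⟨hMk, hMk1, hPk⟩ := ih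
    refine ⟨hMk1, ?_, ?_⟩
    · have hrec := two_mul_gaussianExpectation_centeredQuadratic_pow_add_two a b k
      have : 0 ≤ 2 * γ (q ^ (k + 2)) := by rw [hrec]; positivity
      linarith
    · rw [gaussianExpectation_centeredQuadratic_pow_succ_mul_derivative]
      positivity

end Stein

section Moments

variable {Ω : Type*} [MeasurableSpace Ω] {P : Measure Ω}

def HasNonnegMoments (Y : Ω → ℝ) (P : Measure Ω) : Prop :=
  ∀ k : ℕ, Integrable (fun ω => Y ω ^ k) P ∧ 0 ≤ ∫ ω, Y ω ^ k ∂P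

lemma HasNonnegMoments.integrable {Y : Ω → ℝ} (hY : HasNonnegMoments Y P) : Integrable Y P := by
  simpa using (hY 1).1

lemma HasNonnegMoments.add {U V : Ω → ℝ} (hUV : IndepFun U V P)
    (hU : HasNonnegMoments U P) (hV : HasNonnegMoments V P) : HasNonnegMoments (U + V) P := by
  intro k
  have hind (i j : ℕ) : IndepFun (fun ω => U ω ^ i) (fun ω => V ω ^ j) P :=
    hUV.comp (measurable_id.pow_const i) (measurable_id.pow_const j)
  have hterm (i j : ℕ) : Integrable (fun ω => U ω ^ i * V ω ^ j) P :=
    (hind i j).integrable_mul (hU i).1 (hV j).1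
  have hexpand : (fun ω => (U + V) ω ^ k)
      = fun ω => ∑ i ∈ Finset.range (k + 1), U ω ^ i * V ω ^ (k - i) * (k.choose i : ℝ) :=
    funext fun ω => add_pow (U ω) (V ω) k
  rw [hexpand]
  refine ⟨integrable_finsetSum _ fun i _ => (hterm i (k - i)).mul_const _, ?_⟩
  rw [integral_finsetSum _ fun i _ => (hterm i (k - i)).mul_const _]
  refine Finset.sum_nonneg fun i _ => ?_
  rw [integral_mul_const, (hind i (k - i)).integral_fun_mul_eq_mul_integral
    (hU i).1.aestronglyMeasurable (hV (k - i)).1.aestronglyMeasurable]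
  exact mul_nonneg (mul_nonneg (hU i).2 (hV (k - i)).2) (Nat.cast_nonneg _)

lemma hasNonnegMoments_zero [IsFiniteMeasure P] : HasNonnegMoments (0 : Ω → ℝ) P := by
  intro k
  rcases k with _ | k <;> simp

lemma hasNonnegMoments_sum [IsFiniteMeasure P] {ι : Type*} {Y : ι → Ω → ℝ}
    (hindep : iIndepFun Y P) (hY : ∀ i, HasNonnegMoments (Y i) P) (s : Finset ι) :
    HasNonnegMoments (∑ i ∈ s, Y i) P := by
  classical
  induction s using Finset.induction_on with
  | empty => simpa using hasNonnegMoments_zero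
  | insert i s hi ih =>
    rw [Finset.sum_insert hi, add_comm]
    exact ih.add (hindep.indepFun_finsetSum_of_notMem₀
      (fun j => (hY j).integrable.aemeasurable) hi) (hY i)

end Moments

section Transfer

variable {Ω : Type*} [MeasurableSpace Ω] {P : Measure Ω} {g : Ω → ℝ} {μ : ℝ} {v : ℝ≥0}

lemma HasLaw.integrable_eval_comp (hg : HasLaw g (gaussianReal μ v) P) (p : ℝ[X]) :
    Integrable (fun ω => p.eval (g ω)) P := by
  have h := integrable_map_measure (f := g) (μ := P) (g := fun x => p.eval x)
    (by rw [hg.map_eq]; exact p.continuous.aestronglyMeasurable) hg.aemeasurable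
  rw [hg.map_eq] at h
  exact h.mp (integrable_eval_gaussianReal μ v p)

lemma HasLaw.integral_eval_comp (hg : HasLaw g (gaussianReal μ v) P) (p : ℝ[X]) :
    ∫ ω, p.eval (g ω) ∂P = gaussianExpectation μ v p :=
  hg.integral_comp p.continuous.aestronglyMeasurable

end Transfer

lemma HasLaw.hasNonnegMoments_eval_centeredQuadratic {Ω : Type*} [MeasurableSpace Ω]
    {P : Measure Ω} {g : Ω → ℝ} (hg : HasLaw g (gaussianReal 0 1) P) {a : ℝ} (ha : 0 ≤ a)
    (b : ℝ) : HasNonnegMoments (fun ω => (centeredQuadratic a b).eval (g ω)) P := by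
  intro k
  simp only [← eval_pow]
  exact ⟨hg.integrable_eval_comp _, (hg.integral_eval_comp _).symm ▸
    gaussianExpectation_centeredQuadratic_pow_nonneg a b ha k⟩

end ProbabilityTheory

open ProbabilityTheory in
lemma sq_norm_add_mul_add_I_mul_div_sqrt_two (m : ℂ) (s t u : ℝ) :
    ‖m + s * (t + Complex.I * u) / (√2 : ℂ)‖ ^ 2
      = ‖m‖ ^ 2 + s ^ 2 + (centeredQuadratic (s ^ 2 / 2) (s * √2 * m.re)).eval t
        + (centeredQuadratic (s ^ 2 / 2) (s * √2 * m.im)).eval u := by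
  have h2 : √2 ^ 2 = 2 := Real.sq_sqrt zero_le_two
  simp [centeredQuadratic, Complex.sq_norm, Complex.normSq_apply, Complex.div_re, Complex.div_im]
  field_simp
  linear_combination s ^ 2 * (t ^ 2 + u ^ 2) * h2

theorem central_moments_nonneg_of_gaussian_quadratic_form_general
    {Ω : Type*} [MeasureSpace Ω] [IsProbabilityMeasure (ℙ : Measure Ω)]
    (lam₁ lam₂ : ℝ) (hlam₁ : 0 ≤ lam₁) (hlam₂ : 0 ≤ lam₂)
    (m₁ m₂ : ℂ) (s₁ s₂ : ℝ)
    (g : Fin 4 → Ω → ℝ) (hgmeas : ∀ i, Measurable (g i))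
    (hindep : iIndepFun g ℙ)
    (hgauss : ∀ i, Measure.map (g i) ℙ = gaussianReal 0 1)
    (G₁ G₂ : Ω → ℂ)
    (hG₁ : G₁ = fun ω => m₁ + (s₁ : ℂ) * (g 0 ω + Complex.I * g 1 ω) / (Real.sqrt 2 : ℂ))
    (hG₂ : G₂ = fun ω => m₂ + (s₂ : ℂ) * (g 2 ω + Complex.I * g 3 ω) / (Real.sqrt 2 : ℂ))
    (X : Ω → ℝ)
    (hX : X = fun ω => lam₁ * ‖G₁ ω‖ ^ 2 + lam₂ * ‖G₂ ω‖ ^ 2)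
    (n : ℕ) :
    0 ≤ ∫ ω, (X ω - ∫ ω', X ω' ∂ℙ) ^ n ∂ℙ := by
  set a : Fin 4 → ℝ := ![lam₁ * (s₁ ^ 2 / 2), lam₁ * (s₁ ^ 2 / 2),
    lam₂ * (s₂ ^ 2 / 2), lam₂ * (s₂ ^ 2 / 2)]
  set b : Fin 4 → ℝ := ![lam₁ * (s₁ * √2 * m₁.re), lam₁ * (s₁ * √2 * m₁.im),
    lam₂ * (s₂ * √2 * m₂.re), lam₂ * (s₂ * √2 * m₂.im)]
  set Y : Fin 4 → Ω → ℝ := fun i ω => (centeredQuadratic (a i) (b i)).eval (g i ω)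
  set c := lam₁ * (‖m₁‖ ^ 2 + s₁ ^ 2) + lam₂ * (‖m₂‖ ^ 2 + s₂ ^ 2)
  have hlaw (i : Fin 4) : HasLaw (g i) (gaussianReal 0 1) := ⟨(hgmeas i).aemeasurable, hgauss i⟩
  have hY (i : Fin 4) : HasNonnegMoments (Y i) ℙ :=
    (hlaw i).hasNonnegMoments_eval_centeredQuadratic (by fin_cases i <;> simp [a] <;> positivity) _
  have hYmean (i : Fin 4) : ∫ ω, Y i ω = 0 := by
    simp only [Y, (hlaw i).integral_eval_comp, gaussianExpectation_centeredQuadratic]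
  have hYindep : iIndepFun Y ℙ :=
    hindep.comp _ fun i => (centeredQuadratic (a i) (b i)).continuous.measurable
  have hXY : X = fun ω => c + ∑ i, Y i ω := by
    ext ω
    simp [hX, hG₁, hG₂, sq_norm_add_mul_add_I_mul_div_sqrt_two, Fin.sum_univ_four, Y, a, b, c,
      centeredQuadratic]
    ring
  have hEX : ∫ ω, X ω = c := by
    have hint (i : Fin 4) : Integrable (Y i) := (hY i).integrable
    rw [hXY, integral_add (integrable_const c) (integrable_finsetSum _ fun i _ => hint i),
      integral_finsetSum _ fun i _ => hint i]
    simp [hYmean]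
  have hcentered : (fun ω => (X ω - ∫ ω', X ω') ^ n) = fun ω => (∑ i, Y i) ω ^ n := by
    ext ω
    rw [hEX, hXY, Finset.sum_apply, add_sub_cancel_left]
  exact hcentered ▸ (hasNonnegMoments_sum hYindep hY Finset.univ n).2

/-- All central moments of a positive semidefinite Gaussian quadratic form
`X = λ₁|G₁|² + λ₂|G₂|²` (with `G₁, G₂` independent circularly symmetric complex
Gaussians) are nonnegative. -/
theorem central_moments_nonneg_of_gaussian_quadratic_form
    {Ω : Type*} [MeasureSpace Ω] [IsProbabilityMeasure (ℙ : Measure Ω)]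
    (lam₁ lam₂ : ℝ) (hlam₁ : 0 ≤ lam₁) (hlam₂ : 0 ≤ lam₂)
    (m₁ m₂ : ℂ) (s₁ s₂ : ℝ)
    (g : Fin 4 → Ω → ℝ) (hgmeas : ∀ i, Measurable (g i))
    (hindep : iIndepFun g ℙ)
    (hgauss : ∀ i, Measure.map (g i) ℙ = gaussianReal 0 1)
    (G₁ G₂ : Ω → ℂ)
    (hG₁ : G₁ = fun ω => m₁ + (s₁ : ℂ) * (g 0 ω + Complex.I * g 1 ω) / (Real.sqrt 2 : ℂ))
    (hG₂ : G₂ = fun ω => m₂ + (s₂ : ℂ) * (g 2 ω + Complex.I * g 3 ω) / (Real.sqrt 2 : ℂ))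
    (X : Ω → ℝ)
    (hX : X = fun ω => lam₁ * ‖G₁ ω‖ ^ 2 + lam₂ * ‖G₂ ω‖ ^ 2)
    (n : ℕ) (hn : 0 < n) :
    0 ≤ ∫ ω, (X ω - ∫ ω', X ω' ∂ℙ) ^ n ∂ℙ :=
  central_moments_nonneg_of_gaussian_quadratic_form_general lam₁ lam₂ hlam₁ hlam₂ m₁ m₂ s₁ s₂ g
    hgmeas hindep hgauss G₁ G₂ hG₁ hG₂ X hX n
end

section
/- For every a > 0 with a ≠ 1 and every x > 0, it holds that (1 − e^{−s_a x})^a < γ(a,x)/Γ(a), where γ(a,x) = ∫₀ˣ t^{a−1}e^{−t} dt is the lower incomplete gamma function, Γ is the gamma function, and s_a = 1 if 0 < a < 1 and s_a = (Γ(1+a))^{−1/a} if a > 1. -/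
/-!
Set `G(x) = γ(a, x) - Γ(a) (1 - e^{-s x})^a`. Then `G(0) = 0` and `G(x) → Γ(a) - Γ(a) = 0` as
`x → ∞`, and `G' = p - q` with `p(x) = x^{a-1} e^{-x}` and
`q(x) = Γ(a+1) s e^{-sx} (1 - e^{-sx})^{a-1}`. The sign of `G'` is that of
`ψ = log p - log q`, whose derivative is `(a - 1) s w(s x) + s - 1` with
`w(t) = 1/t - 1/(e^t - 1)` positive and strictly decreasing. For `a < 1`, `s = 1` the function `ψ`
is strictly decreasing; for `a > 1` it is strictly concave, and the choice `s = Γ(1+a)^{-1/a}` is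
exactly what makes `ψ(0+) = 0`. Either way `G'` changes sign at most once, from `+` to `-`, so `G`
rises from `0` and then decreases to its limit `0`, hence `G > 0` on `(0, ∞)`.
-/

open Real Set Filter Topology MeasureTheory intervalIntegral

def NegAfterNonpos (g : ℝ → ℝ) : Prop :=
  ∀ ⦃t y : ℝ⦄, 0 < t → t < y → g t ≤ 0 → g y < 0

theorem StrictAntiOn.negAfterNonpos {g : ℝ → ℝ} (hg : StrictAntiOn g (Ioi 0)) :
    NegAfterNonpos g :=
  fun _ _ ht hty hgt => (hg ht (ht.trans hty) hty).trans_le hgt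

theorem NegAfterNonpos.of_tendsto_zero_of_strictAntiOn_deriv {ψ ψ' : ℝ → ℝ}
    (hψ : ∀ x, 0 < x → HasDerivAt ψ (ψ' x) x) (hψ' : StrictAntiOn ψ' (Ioi 0))
    (hlim : Tendsto ψ (𝓝[>] 0) (𝓝 0)) : NegAfterNonpos ψ := by
  intro t y ht hty hψt
  -- otherwise `ψ` would increase on `(0, t]` from its limit `0` at `0+`, yet `ψ t ≤ 0`
  obtain ⟨c, hc, hψ'c⟩ : ∃ c ∈ Ioo 0 t, ψ' c ≤ 0 := by
    by_contra! hpos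
    have hmono : StrictMonoOn ψ (Ioc 0 t) :=
      strictMonoOn_of_hasDerivWithinAt_pos (convex_Ioc 0 t)
        (fun z hz => (hψ z hz.1).continuousAt.continuousWithinAt)
        (fun z hz => (hψ z (by simp_all)).hasDerivWithinAt)
        (fun z hz => hpos z (by simpa using hz))
    have hhalf : t / 2 ∈ Ioc 0 t := ⟨half_pos ht, half_le_self ht.le⟩
    have hψhalf : 0 ≤ ψ (t / 2) := by
      refine le_of_tendsto hlim ?_
      filter_upwards [Ioo_mem_nhdsGT (half_pos ht)] with z hz
      exact (hmono ⟨hz.1, hz.2.le.trans hhalf.2⟩ hhalf hz.2).le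
    linarith [hmono hhalf ⟨ht, le_rfl⟩ (half_lt_self ht)]
  have hanti : StrictAntiOn ψ (Icc t y) :=
    strictAntiOn_of_hasDerivWithinAt_neg (convex_Icc t y)
      (fun z hz => (hψ z (ht.trans_le hz.1)).continuousAt.continuousWithinAt)
      (fun z hz => (hψ z (by simp at hz; linarith)).hasDerivWithinAt)
      (fun z hz => by
        simp only [interior_Icc] at hz
        have hz0 : 0 < z := hc.1.trans (hc.2.trans hz.1)
        exact (hψ' hc.1 hz0 (hc.2.trans hz.1)).trans_le hψ'c)
  exact (hanti ⟨le_rfl, hty.le⟩ ⟨hty.le, le_rfl⟩ hty).trans_le hψt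

theorem NegAfterNonpos.sub_of_eq_log_sub_log {ψ p q : ℝ → ℝ} (hψ : NegAfterNonpos ψ)
    (hp : ∀ x, 0 < x → 0 < p x) (hq : ∀ x, 0 < x → 0 < q x)
    (hψpq : ∀ x, 0 < x → ψ x = log (p x) - log (q x)) :
    NegAfterNonpos fun x => p x - q x := by
  intro t y ht hty hpqt
  have hψt : ψ t ≤ 0 := by
    rw [hψpq t ht, sub_nonpos, log_le_log_iff (hp t ht) (hq t ht)]
    exact sub_nonpos.1 hpqt
  have hψy := hψ ht hty hψt
  have hy := ht.trans hty
  rw [hψpq y hy, sub_neg, log_lt_log_iff (hp y hy) (hq y hy)] at hψy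
  exact sub_neg.2 hψy

theorem pos_of_hasDerivAt_of_negAfterNonpos {G G' : ℝ → ℝ} (hcont : ContinuousOn G (Ici 0))
    (hG0 : G 0 = 0) (hG : ∀ x, 0 < x → HasDerivAt G (G' x) x) (hG' : NegAfterNonpos G')
    (hlim : Tendsto G atTop (𝓝 0)) {x : ℝ} (hx : 0 < x) : 0 < G x := by
  by_cases hpos : ∀ t ∈ Ioc 0 x, 0 < G' t
  · have hmono : StrictMonoOn G (Icc 0 x) :=
      strictMonoOn_of_hasDerivWithinAt_pos (convex_Icc 0 x) (hcont.mono Icc_subset_Ici_self)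
        (fun z hz => (hG z (by simp_all)).hasDerivWithinAt)
        (fun z hz => hpos z (by simp at hz; exact ⟨hz.1, hz.2.le⟩))
    simpa [hG0] using hmono (left_mem_Icc.2 hx.le) (right_mem_Icc.2 hx.le) hx
  · push Not at hpos
    obtain ⟨t, ht, hG't⟩ := hpos
    have hanti : StrictAntiOn G (Ici x) :=
      strictAntiOn_of_hasDerivWithinAt_neg (convex_Ici x)
        (fun z hz => (hG z (hx.trans_le hz)).continuousAt.continuousWithinAt)
        (fun z hz => (hG z (by simp at hz; linarith)).hasDerivWithinAt)
        (fun z hz => hG' ht.1 (by simp at hz; linarith [ht.2]) hG't)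
    have hGx1 : 0 ≤ G (x + 1) := by
      refine le_of_tendsto hlim ?_
      filter_upwards [eventually_gt_atTop (x + 1)] with z hz
      exact (hanti (show x ≤ x + 1 by linarith) (show x ≤ z by linarith) hz).le
    linarith [hanti (show x ≤ x from le_rfl) (show x ≤ x + 1 by linarith) (lt_add_one x)]

theorem one_sub_exp_neg_mul_pos {s x : ℝ} (hs : 0 < s) (hx : 0 < x) :
    0 < 1 - exp (-(s * x)) :=
  sub_pos.2 (exp_lt_one_iff.2 (neg_neg_of_pos (mul_pos hs hx)))

theorem hasDerivAt_one_sub_exp_neg_mul (s x : ℝ) :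
    HasDerivAt (fun y => 1 - exp (-(s * y))) (s * exp (-(s * x))) x := by
  have h : HasDerivAt (fun y => -(s * y)) (-s) x := by
    simpa using (hasDerivAt_id x).const_mul (-s)
  exact (h.exp.const_sub 1).congr_deriv (by ring)

theorem mul_exp_half_lt_exp_sub_one {t : ℝ} (ht : 0 < t) : t * exp (t / 2) < exp t - 1 := by
  have hsinh : t / 2 < sinh (t / 2) := self_lt_sinh_iff.2 (half_pos ht)
  have hid : exp t - 1 = 2 * sinh (t / 2) * exp (t / 2) := by
    rw [sinh_eq, mul_div_cancel₀ _ two_ne_zero, sub_mul, ← exp_add, ← exp_add]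
    norm_num
  rw [hid]
  nlinarith [exp_pos (t / 2)]

theorem inv_exp_sub_one_lt_inv {t : ℝ} (ht : 0 < t) : (exp t - 1)⁻¹ < t⁻¹ :=
  inv_strictAnti₀ ht (by linarith [add_one_lt_exp ht.ne'])

theorem strictAntiOn_inv_sub_inv_exp_sub_one :
    StrictAntiOn (fun t => t⁻¹ - (exp t - 1)⁻¹) (Ioi 0) := by
  have hexp : ∀ t : ℝ, 0 < t → 0 < exp t - 1 := fun t ht => sub_pos.2 (one_lt_exp_iff.2 ht)
  refine strictAntiOn_of_hasDerivWithinAt_neg (convex_Ioi 0)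
    (f' := fun t => -(t ^ 2)⁻¹ + exp t / (exp t - 1) ^ 2)
    (fun t ht => ((hasDerivAt_inv ht.out.ne').sub
      (((hasDerivAt_exp t).sub_const 1).inv (hexp t ht).ne')).continuousAt.continuousWithinAt)
    (fun t ht => ?_) (fun t ht => ?_) <;> rw [interior_Ioi] at ht
  · refine (((hasDerivAt_inv ht.out.ne').sub
      (((hasDerivAt_exp t).sub_const 1).inv (hexp t ht).ne')).congr_deriv ?_).hasDerivWithinAt
    ring
  · have hkey : t ^ 2 * exp t < (exp t - 1) ^ 2 := by
      have h := mul_exp_half_lt_exp_sub_one ht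
      have hsq : exp (t / 2) ^ 2 = exp t := by rw [← exp_nat_mul]; ring_nf
      rw [← hsq]
      nlinarith [mul_pos ht (exp_pos (t / 2))]
    have : exp t / (exp t - 1) ^ 2 < (t ^ 2)⁻¹ := by
      rw [div_lt_iff₀ (by nlinarith [hexp t ht]), inv_mul_eq_div,
        lt_div_iff₀ (by nlinarith [ht.out])]
      linarith
    linarith

noncomputable def lowerIncGamma (a x : ℝ) : ℝ :=
  ∫ t in (0 : ℝ)..x, t ^ (a - 1) * exp (-t)

section LowerIncGamma

variable {a : ℝ}

theorem integrableOn_rpow_mul_exp_neg (ha : 0 < a) :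
    IntegrableOn (fun t : ℝ => t ^ (a - 1) * exp (-t)) (Ioi 0) :=
  (GammaIntegral_convergent ha).congr_fun (fun _ _ => mul_comm _ _) measurableSet_Ioi

theorem lowerIncGamma_zero : lowerIncGamma a 0 = 0 :=
  integral_same

theorem continuousOn_lowerIncGamma (ha : 0 < a) : ContinuousOn (lowerIncGamma a) (Ici 0) := by
  intro x hx
  have hint : IntegrableOn (fun t : ℝ => t ^ (a - 1) * exp (-t)) (uIcc 0 (x + 1)) := by
    rw [uIcc_of_le (by linarith [hx.out]), integrableOn_Icc_iff_integrableOn_Ioc]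
    exact (integrableOn_rpow_mul_exp_neg ha).mono_set Ioc_subset_Ioi_self
  have hmem : x ∈ uIcc (0 : ℝ) (x + 1) := by
    rw [uIcc_of_le (by linarith [hx.out])]; exact ⟨hx, by linarith⟩
  exact (continuousOn_primitive_interval hint x hmem).mono_of_mem_nhdsWithin
    (by rw [uIcc_of_le (by linarith [hx.out])]
        exact inter_mem_nhdsWithin _ (Iic_mem_nhds (lt_add_one x)))

theorem hasDerivAt_lowerIncGamma (ha : 0 < a) {x : ℝ} (hx : 0 < x) :
    HasDerivAt (lowerIncGamma a) (x ^ (a - 1) * exp (-x)) x := by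
  have hcont : ContinuousOn (fun t : ℝ => t ^ (a - 1) * exp (-t)) (Ioi 0) :=
    fun t ht => ((continuousAt_rpow_const t _ (Or.inl ht.out.ne')).mul
      (continuous_exp.comp continuous_neg).continuousAt).continuousWithinAt
  refine integral_hasDerivAt_right ?_
    (hcont.stronglyMeasurableAtFilter isOpen_Ioi x hx) (hcont.continuousAt (Ioi_mem_nhds hx))
  rw [intervalIntegrable_iff_integrableOn_Ioc_of_le hx.le]
  exact (integrableOn_rpow_mul_exp_neg ha).mono_set Ioc_subset_Ioi_self

theorem tendsto_lowerIncGamma_atTop (ha : 0 < a) :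
    Tendsto (lowerIncGamma a) atTop (𝓝 (Gamma a)) := by
  have h := intervalIntegral_tendsto_integral_Ioi 0 (integrableOn_rpow_mul_exp_neg ha) tendsto_id
  rwa [Gamma_eq_integral ha,
    setIntegral_congr_fun measurableSet_Ioi (fun _ _ => mul_comm _ _)]

end LowerIncGamma

section Comparison

variable {a s : ℝ}

theorem hasDerivAt_gamma_mul_one_sub_exp_neg_mul_rpow (ha : 0 < a) (hs : 0 < s) {x : ℝ}
    (hx : 0 < x) :
    HasDerivAt (fun y => Gamma a * (1 - exp (-(s * y))) ^ a)
      (Gamma (a + 1) * s * exp (-(s * x)) * (1 - exp (-(s * x))) ^ (a - 1)) x := by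
  refine (((hasDerivAt_one_sub_exp_neg_mul s x).rpow_const
    (Or.inl (one_sub_exp_neg_mul_pos hs hx).ne')).const_mul (Gamma a)).congr_deriv ?_
  rw [Gamma_add_one ha.ne']
  ring

theorem tendsto_one_sub_exp_neg_mul_rpow_atTop (hs : 0 < s) :
    Tendsto (fun y => (1 - exp (-(s * y))) ^ a) atTop (𝓝 1) := by
  have hexp : Tendsto (fun y => exp (-(s * y))) atTop (𝓝 0) :=
    tendsto_exp_atBot.comp (tendsto_neg_atTop_atBot.comp (tendsto_id.const_mul_atTop hs))
  have hbase := hexp.const_sub 1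
  rw [sub_zero] at hbase
  simpa [Function.comp_def] using
    (continuousAt_rpow_const 1 a (Or.inl one_ne_zero)).tendsto.comp hbase

end Comparison

noncomputable def alzerLogRatio (a s x : ℝ) : ℝ :=
  (a - 1) * (log x - log (1 - exp (-(s * x)))) + (s - 1) * x - log (Gamma (a + 1) * s)

section AlzerLogRatio

variable {a s : ℝ}

theorem alzerLogRatio_eq_log_sub_log (ha : 0 < a) (hs : 0 < s) {x : ℝ} (hx : 0 < x) :
    alzerLogRatio a s x = log (x ^ (a - 1) * exp (-x))
      - log (Gamma (a + 1) * s * exp (-(s * x)) * (1 - exp (-(s * x))) ^ (a - 1)) := by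
  have hu := one_sub_exp_neg_mul_pos hs hx
  rw [log_mul (by positivity) (exp_ne_zero _), log_rpow hx, log_exp,
    log_mul (by positivity) (by positivity), log_mul (by positivity) (exp_ne_zero _), log_exp,
    log_rpow hu, alzerLogRatio]
  ring

theorem hasDerivAt_alzerLogRatio (hs : 0 < s) {x : ℝ} (hx : 0 < x) :
    HasDerivAt (alzerLogRatio a s)
      ((a - 1) * s * ((s * x)⁻¹ - (exp (s * x) - 1)⁻¹) + (s - 1)) x := by
  have hu := one_sub_exp_neg_mul_pos hs hx
  have hlin : HasDerivAt (fun y : ℝ => (s - 1) * y) (s - 1) x := by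
    simpa using (hasDerivAt_id x).const_mul (s - 1)
  refine ((((hasDerivAt_log hx.ne').sub ((hasDerivAt_one_sub_exp_neg_mul s x).log hu.ne')).const_mul
    (a - 1)).add hlin).sub_const _ |>.congr_deriv ?_
  have hexp : exp (s * x) - 1 ≠ 0 := (sub_pos.2 (one_lt_exp_iff.2 (mul_pos hs hx))).ne'
  rw [exp_neg] at hu ⊢
  field_simp

theorem tendsto_alzerLogRatio_nhdsGT_zero (hs : 0 < s) :
    Tendsto (alzerLogRatio a s) (𝓝[>] 0)
      (𝓝 ((a - 1) * (-log s) - log (Gamma (a + 1) * s))) := by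
  have hslope : Tendsto (fun x => (1 - exp (-(s * x))) / x) (𝓝[>] 0) (𝓝 s) := by
    have h := (hasDerivAt_iff_tendsto_slope_zero.1 (hasDerivAt_one_sub_exp_neg_mul s 0)).mono_left
      (nhdsWithin_mono 0 fun y (hy : y ∈ Ioi 0) => hy.out.ne')
    simpa [div_eq_inv_mul] using h
  have hlin : Tendsto (fun x : ℝ => (s - 1) * x) (𝓝[>] 0) (𝓝 0) := by
    simpa using ((continuous_const_mul (s - 1)).tendsto 0).mono_left nhdsWithin_le_nhds
  have h := (((hslope.log hs.ne').neg.const_mul (a - 1)).add hlin).sub_const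
    (log (Gamma (a + 1) * s))
  rw [add_zero] at h
  refine h.congr' ?_
  filter_upwards [self_mem_nhdsWithin] with y (hy : 0 < y)
  rw [alzerLogRatio, log_div (one_sub_exp_neg_mul_pos hs hy).ne' hy.ne']
  ring

end AlzerLogRatio

theorem negAfterNonpos_alzerLogRatio_one {a : ℝ} (ha : a < 1) :
    NegAfterNonpos (alzerLogRatio a 1) := by
  refine StrictAntiOn.negAfterNonpos <| strictAntiOn_of_hasDerivWithinAt_neg (convex_Ioi 0)
    (fun x hx => (hasDerivAt_alzerLogRatio one_pos hx).continuousAt.continuousWithinAt)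
    (fun x hx => (hasDerivAt_alzerLogRatio one_pos (by simpa using hx)).hasDerivWithinAt)
    (fun x hx => ?_)
  rw [interior_Ioi] at hx
  have hw := sub_pos.2 (inv_exp_sub_one_lt_inv hx.out)
  simp only [one_mul, mul_one, sub_self, add_zero]
  nlinarith

theorem negAfterNonpos_alzerLogRatio_gamma_rpow {a : ℝ} (ha : 1 < a) :
    NegAfterNonpos (alzerLogRatio a (Gamma (1 + a) ^ (-1 / a))) := by
  have hΓ : 0 < Gamma (1 + a) := Gamma_pos_of_pos (by linarith)
  set s := Gamma (1 + a) ^ (-1 / a) with hs_def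
  have hs : 0 < s := rpow_pos_of_pos hΓ _
  have hlim0 : (a - 1) * (-log s) - log (Gamma (a + 1) * s) = 0 := by
    rw [add_comm a 1, log_mul hΓ.ne' hs.ne', hs_def, log_rpow hΓ]
    field_simp
    ring
  have hlim := tendsto_alzerLogRatio_nhdsGT_zero (a := a) hs
  rw [hlim0] at hlim
  refine .of_tendsto_zero_of_strictAntiOn_deriv (fun x hx => hasDerivAt_alzerLogRatio hs hx)
    (fun x hx y hy hxy => ?_) hlim
  have hw := strictAntiOn_inv_sub_inv_exp_sub_one (mul_pos hs hx) (mul_pos hs hy)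
    (mul_lt_mul_of_pos_left hxy hs)
  have := mul_lt_mul_of_pos_left hw (mul_pos (sub_pos.2 ha) hs)
  linarith

theorem gamma_mul_one_sub_exp_neg_mul_rpow_lt_lowerIncGamma {a s x : ℝ} (ha : 0 < a) (hs : 0 < s)
    (hψ : NegAfterNonpos (alzerLogRatio a s)) (hx : 0 < x) :
    Gamma a * (1 - exp (-(s * x))) ^ a < lowerIncGamma a x := by
  have hlim : Tendsto (fun y => lowerIncGamma a y - Gamma a * (1 - exp (-(s * y))) ^ a) atTop
      (𝓝 0) := by
    simpa using (tendsto_lowerIncGamma_atTop ha).sub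
      ((tendsto_one_sub_exp_neg_mul_rpow_atTop hs).const_mul (Gamma a))
  have hG := pos_of_hasDerivAt_of_negAfterNonpos
    (G := fun y => lowerIncGamma a y - Gamma a * (1 - exp (-(s * y))) ^ a)
    ((continuousOn_lowerIncGamma ha).sub
      (Continuous.continuousOn (by fun_prop (disch := exact ha.le))))
    (by simp [lowerIncGamma_zero, zero_rpow ha.ne'])
    (fun y hy => (hasDerivAt_lowerIncGamma ha hy).sub
      (hasDerivAt_gamma_mul_one_sub_exp_neg_mul_rpow ha hs hy))
    (hψ.sub_of_eq_log_sub_log (fun y hy => by positivity)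
      (fun y hy => by have := one_sub_exp_neg_mul_pos hs hy; positivity)
      (fun y hy => alzerLogRatio_eq_log_sub_log ha hs hy))
    hlim hx
  exact sub_pos.1 hG

/-- Alzer's lower bound on the regularized lower incomplete gamma function:
for `a > 0`, `a ≠ 1` and `x > 0`, `(1 − e^{−s_a·x})^a < γ(a,x)/Γ(a)`, where
`s_a = 1` if `0 < a < 1` and `s_a = Γ(1+a)^{−1/a}` if `a > 1`. -/
theorem alzer_incomplete_gamma_lower_bound
    (a x : ℝ) (ha : 0 < a) (hane : a ≠ 1) (hx : 0 < x) :
    (1 - Real.exp (-((if a < 1 then (1 : ℝ) else Real.Gamma (1 + a) ^ (-1 / a)) * x))) ^ a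
      < (∫ t in (0 : ℝ)..x, t ^ (a - 1) * Real.exp (-t)) / Real.Gamma a := by
  rw [lt_div_iff₀ (Gamma_pos_of_pos ha), mul_comm]
  rcases hane.lt_or_gt with h | h
  · rw [if_pos h]
    exact gamma_mul_one_sub_exp_neg_mul_rpow_lt_lowerIncGamma ha one_pos
      (negAfterNonpos_alzerLogRatio_one h) hx
  · rw [if_neg h.not_gt]
    exact gamma_mul_one_sub_exp_neg_mul_rpow_lt_lowerIncGamma ha
      (rpow_pos_of_pos (Gamma_pos_of_pos (by linarith)) _)
      (negAfterNonpos_alzerLogRatio_gamma_rpow h) hx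
end
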